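/- For a continuous loop α generating π₁(SL(2,ℝ)), represented by t ↦ rotation by angle 2πt (t ∈ [0,1]), the Maslov index satisfies μ(α · c) = 2ρ(α) + μ(c) for any continuous path c : [0,1] → SL(2,ℝ) with c(0) = Id, where ρ : π₁(SL(2,ℝ)) → ℤ is the natural isomorphism. In particular μ of the standard full rotation loop equals 2. -/

import Mathlib

/-!
Left multiplication by `rotMat (a * t)` rotates every vector `c t • X` by the angle `a * t`, so
angle lifts `θ` for `c` and `θ + a * t` for the rotated path correspond bijectively. Over `[0, χ]`
with `a * χ = 2πk` every total rotation angle is shifted by exactly `2πk`, which moves each of the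
cases defining the Maslov index from `p` to `p + k`. The full rotation loop is the case `k = 1` of
the constant path, whose Maslov index is `0`.
-/

noncomputable def enorm2 (v : Fin 2 → ℝ) : ℝ := Real.sqrt (v 0 ^ 2 + v 1 ^ 2)

noncomputable def IsRotLift (c : ℝ → Matrix (Fin 2) (Fin 2) ℝ) (χ : ℝ)
    (X : Fin 2 → ℝ) (θ : ℝ → ℝ) : Prop :=
  ContinuousOn θ (Set.Icc 0 χ) ∧
  ∀ t ∈ Set.Icc (0 : ℝ) χ,
    (c t).mulVec X = enorm2 ((c t).mulVec X) • ![Real.cos (θ t), Real.sin (θ t)]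

noncomputable def MaslovIs (c : ℝ → Matrix (Fin 2) (Fin 2) ℝ) (χ : ℝ) (μ : ℤ) : Prop :=
  (∃ p : ℤ, μ = 2 * p + 1 ∧
    ∀ X : Fin 2 → ℝ, enorm2 X = 1 → ∀ θ : ℝ → ℝ, IsRotLift c χ X θ →
      θ χ - θ 0 ∈ Set.Ioo (2 * (p : ℝ) * Real.pi) (2 * ((p : ℝ) + 1) * Real.pi)) ∨
  (∃ p : ℤ, μ = 2 * p ∧
    ∃ X : Fin 2 → ℝ, enorm2 X = 1 ∧ ∃ θ : ℝ → ℝ, IsRotLift c χ X θ ∧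
      θ χ - θ 0 = 2 * (p : ℝ) * Real.pi)

/-- Rotation matrix by angle θ. -/
noncomputable def rotMat (θ : ℝ) : Matrix (Fin 2) (Fin 2) ℝ :=
  !![Real.cos θ, -Real.sin θ; Real.sin θ, Real.cos θ]

lemma rotMat_mulVec (φ : ℝ) (v : Fin 2 → ℝ) :
    (rotMat φ).mulVec v = ![Real.cos φ * v 0 - Real.sin φ * v 1,
      Real.sin φ * v 0 + Real.cos φ * v 1] := by
  funext i
  fin_cases i <;> simp [rotMat, Matrix.mulVec, dotProduct, Fin.sum_univ_two]; ring

lemma enorm2_rotMat_mulVec (φ : ℝ) (v : Fin 2 → ℝ) :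
    enorm2 ((rotMat φ).mulVec v) = enorm2 v := by
  rw [rotMat_mulVec, enorm2, enorm2]
  congr 1
  simp only [Matrix.cons_val_zero, Matrix.cons_val_one]
  linear_combination (v 0 ^ 2 + v 1 ^ 2) * Real.sin_sq_add_cos_sq φ

lemma rotMat_mulVec_smul_cos_sin (φ r θ : ℝ) :
    (rotMat φ).mulVec (r • ![Real.cos θ, Real.sin θ]) =
      r • ![Real.cos (θ + φ), Real.sin (θ + φ)] := by
  rw [rotMat_mulVec]
  funext i
  fin_cases i <;> simp [Real.cos_add, Real.sin_add] <;> ring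

lemma rotMat_mul_rotMat (x y : ℝ) : rotMat x * rotMat y = rotMat (x + y) := by
  ext i j
  fin_cases i <;> fin_cases j <;>
    simp [rotMat, Matrix.mul_apply, Fin.sum_univ_two, Real.cos_add, Real.sin_add] <;> ring

lemma rotMat_zero : rotMat 0 = 1 := by
  ext i j
  fin_cases i <;> fin_cases j <;> simp [rotMat]

namespace IsRotLift

variable {c : ℝ → Matrix (Fin 2) (Fin 2) ℝ} {χ : ℝ} {X : Fin 2 → ℝ} {θ : ℝ → ℝ}

lemma rotMat_mul (a : ℝ) (h : IsRotLift c χ X θ) :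
    IsRotLift (fun t => rotMat (a * t) * c t) χ X (fun t => θ t + a * t) := by
  obtain ⟨hθ, hv⟩ := h
  refine ⟨hθ.add (continuous_const.mul continuous_id).continuousOn, fun t ht => ?_⟩
  dsimp only
  rw [← Matrix.mulVec_mulVec, enorm2_rotMat_mulVec, hv t ht, rotMat_mulVec_smul_cos_sin,
    ← hv t ht]

lemma of_rotMat_mul (a : ℝ) (h : IsRotLift (fun t => rotMat (a * t) * c t) χ X θ) :
    IsRotLift c χ X (fun t => θ t + -a * t) := by
  obtain ⟨hθ, hv⟩ := h.rotMat_mul (-a)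
  refine ⟨hθ, fun t ht => ?_⟩
  have hc : rotMat (-a * t) * (rotMat (a * t) * c t) = c t := by
    rw [← mul_assoc, rotMat_mul_rotMat, show -a * t + a * t = 0 by ring, rotMat_zero, one_mul]
  simpa only [hc] using hv t ht

end IsRotLift

lemma enorm2_cos_sin (θ : ℝ) : enorm2 ![Real.cos θ, Real.sin θ] = 1 := by
  simp [enorm2]

lemma maslovIs_const_one (χ : ℝ) : MaslovIs (fun _ => 1) χ 0 := by
  refine Or.inr ⟨0, rfl, ![Real.cos 0, Real.sin 0], enorm2_cos_sin 0, fun _ => 0,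
    ⟨continuousOn_const, fun t _ => ?_⟩, by simp⟩
  rw [Matrix.one_mulVec, enorm2_cos_sin, one_smul]

lemma MaslovIs.rotMat_mul {c : ℝ → Matrix (Fin 2) (Fin 2) ℝ} {χ a : ℝ} {k μ : ℤ}
    (ha : a * χ = 2 * Real.pi * k) (hμ : MaslovIs c χ μ) :
    MaslovIs (fun t => rotMat (a * t) * c t) χ (2 * k + μ) := by
  rcases hμ with ⟨p, rfl, hodd⟩ | ⟨p, rfl, X, hX, θ, hθ, hΔ⟩
  · refine Or.inl ⟨p + k, by ring, fun X hX θ hθ => ?_⟩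
    have h := hodd X hX _ (hθ.of_rotMat_mul a)
    simp only [Set.mem_Ioo, mul_zero, add_zero] at h ⊢
    push_cast
    constructor <;> linarith [h.1, h.2]
  · refine Or.inr ⟨p + k, by ring, X, hX, _, hθ.rotMat_mul a, ?_⟩
    simp only [mul_zero, add_zero]
    push_cast
    linarith

theorem stmt7_general (k : ℤ) (c : ℝ → Matrix (Fin 2) (Fin 2) ℝ)
    (μ : ℤ) (hμ : MaslovIs c 1 μ) :
    -- μ(α·c) = 2ρ(α) + μ(c) for α the k-fold rotation loop (ρ(α) = k)
    MaslovIs (fun t => rotMat (2 * Real.pi * (k : ℝ) * t) * c t) 1 (2 * k + μ) ∧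
    -- μ of the standard full rotation loop equals 2
    MaslovIs (fun t => rotMat (2 * Real.pi * t)) 1 2 := by
  refine ⟨hμ.rotMat_mul (mul_one _), ?_⟩
  have h := (maslovIs_const_one 1).rotMat_mul (a := 2 * Real.pi) (k := 1) (by simp)
  simpa using h

theorem stmt7 (k : ℤ) (c : ℝ → Matrix (Fin 2) (Fin 2) ℝ)
    (hcont : ContinuousOn c (Set.Icc 0 1))
    (hc0 : c 0 = 1)
    (hdet : ∀ t ∈ Set.Icc (0 : ℝ) 1, (c t).det = 1)
    (μ : ℤ) (hμ : MaslovIs c 1 μ) :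
    -- μ(α·c) = 2ρ(α) + μ(c) for α the k-fold rotation loop (ρ(α) = k)
    MaslovIs (fun t => rotMat (2 * Real.pi * (k : ℝ) * t) * c t) 1 (2 * k + μ) ∧
    -- μ of the standard full rotation loop equals 2
    MaslovIs (fun t => rotMat (2 * Real.pi * t)) 1 2 :=
  stmt7_general k c μ hμ
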